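/- arXiv:2102.09270 — 5 statements merged into one kernel-verified Lean document; each statement's English description precedes it below -/
import Mathlib

section
/- If Θ is uniform on [-π, π) and, conditional on Θ, Θ̂ is uniform on the half-circle Voronoi cell containing Θ (i.e., [-π/2, π/2) if Θ ∈ [-π/2, π/2), and the complementary half-circle otherwise), then E[1 - cos(Θ̂ - Θ)] = 1 - 4/π². -/
open Real MeasureTheory

lemma inner_int (θ a b : ℝ) (h : a ≤ b) :
    ∫ t in Set.Ico a b, (1 - Real.cos (t - θ)) / π
      = ((b - a) - (Real.sin (b - θ) - Real.sin (a - θ))) / π := by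
  rw [MeasureTheory.setIntegral_congr_set MeasureTheory.Ico_ae_eq_Ioc, ← intervalIntegral.integral_of_le h]
  have hc : IntervalIntegrable (fun t => Real.cos (t - θ)) volume a b :=
    (Real.continuous_cos.comp (continuous_id.sub continuous_const)).intervalIntegrable a b
  rw [intervalIntegral.integral_div,
    intervalIntegral.integral_sub (intervalIntegrable_const) hc,
    intervalIntegral.integral_const,
    intervalIntegral.integral_comp_sub_right (fun x => Real.cos x) θ, integral_cos]
  simp [smul_eq_mul]

lemma piece (a b c : ℝ) (h : a ≤ b) :
    ∫ θ in Set.Ico a b, (π + c * Real.cos θ) / (2 * π ^ 2)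
      = ((b - a) * π + c * (Real.sin b - Real.sin a)) / (2 * π ^ 2) := by
  rw [MeasureTheory.setIntegral_congr_set MeasureTheory.Ico_ae_eq_Ioc, ← intervalIntegral.integral_of_le h]
  have hc : IntervalIntegrable (fun t => c * Real.cos t) volume a b :=
    (continuous_const.mul Real.continuous_cos).intervalIntegrable a b
  rw [intervalIntegral.integral_div,
    intervalIntegral.integral_add (intervalIntegrable_const) hc,
    intervalIntegral.integral_const, intervalIntegral.integral_const_mul, integral_cos]
  simp [smul_eq_mul]

/-- If `Θ` is uniform on `[-π, π)` (density `1/(2π)`) and, conditional on `Θ`, the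
reconstruction `Θ̂` is uniform (density `1/π`) on the half-circle Voronoi cell
containing `Θ` (namely `[-π/2, π/2)` if `Θ ∈ [-π/2, π/2)`, and the complementary
half-circle `[π/2, 3π/2)` otherwise), then `E[1 - cos (Θ̂ - Θ)] = 1 - 4/π²`. -/
theorem stmt_1 :
    (∫ θ in Set.Ico (-π) π,
        (∫ θhat in (if θ ∈ Set.Ico (-(π / 2)) (π / 2)
              then Set.Ico (-(π / 2)) (π / 2)
              else Set.Ico (π / 2) (3 * π / 2)),
          (1 - Real.cos (θhat - θ)) / π) / (2 * π))
      = 1 - 4 / π ^ 2 := by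
  have hπ := Real.pi_pos
  have key : ∀ θ : ℝ,
      (∫ θhat in (if θ ∈ Set.Ico (-(π / 2)) (π / 2)
            then Set.Ico (-(π / 2)) (π / 2)
            else Set.Ico (π / 2) (3 * π / 2)),
        (1 - Real.cos (θhat - θ)) / π) / (2 * π)
      = (π + (if θ ∈ Set.Ico (-(π / 2)) (π / 2) then (-2 : ℝ) else 2) * Real.cos θ)
          / (2 * π ^ 2) := by
    intro θ
    by_cases hθ : θ ∈ Set.Ico (-(π / 2)) (π / 2)
    · rw [if_pos hθ, if_pos hθ, inner_int θ _ _ (by linarith)]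
      have h1 : Real.sin (π / 2 - θ) = Real.cos θ := Real.sin_pi_div_two_sub θ
      have h2 : Real.sin (-(π / 2) - θ) = -Real.cos θ := by
        rw [show -(π / 2) - θ = -(θ + π / 2) by ring, Real.sin_neg,
          Real.sin_add_pi_div_two]
      rw [h1, h2]
      field_simp
      ring
    · rw [if_neg hθ, if_neg hθ, inner_int θ _ _ (by linarith)]
      have h1 : Real.sin (π / 2 - θ) = Real.cos θ := Real.sin_pi_div_two_sub θ
      have h2 : Real.sin (3 * π / 2 - θ) = -Real.cos θ := by
        rw [show 3 * π / 2 - θ = (π / 2 - θ) + π by ring, Real.sin_add_pi, h1]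
      rw [h1, h2]
      field_simp
      ring
  simp only [key]
  set g : ℝ → ℝ := fun θ =>
    (π + (if θ ∈ Set.Ico (-(π / 2)) (π / 2) then (-2 : ℝ) else 2) * Real.cos θ)
      / (2 * π ^ 2) with hg
  have c1 : Continuous (fun θ : ℝ => (π + (2 : ℝ) * Real.cos θ) / (2 * π ^ 2)) :=
    (continuous_const.add (continuous_const.mul Real.continuous_cos)).div_const _
  have c2 : Continuous (fun θ : ℝ => (π + (-2 : ℝ) * Real.cos θ) / (2 * π ^ 2)) :=
    (continuous_const.add (continuous_const.mul Real.continuous_cos)).div_const _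
  have e1 : Set.EqOn (fun θ : ℝ => (π + (2 : ℝ) * Real.cos θ) / (2 * π ^ 2)) g
      (Set.Ico (-π) (-(π / 2))) := by
    intro θ hθ
    simp only [hg]
    rw [if_neg]
    simp only [Set.mem_Ico] at hθ ⊢
    push_neg
    intro h
    linarith [hθ.2]
  have e2 : Set.EqOn (fun θ : ℝ => (π + (-2 : ℝ) * Real.cos θ) / (2 * π ^ 2)) g
      (Set.Ico (-(π / 2)) (π / 2)) := by
    intro θ hθ
    simp only [hg]
    rw [if_pos hθ]
  have e3 : Set.EqOn (fun θ : ℝ => (π + (2 : ℝ) * Real.cos θ) / (2 * π ^ 2)) g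
      (Set.Ico (π / 2) π) := by
    intro θ hθ
    simp only [hg]
    rw [if_neg]
    simp only [Set.mem_Ico] at hθ ⊢
    push_neg
    intro h
    linarith [hθ.1]
  have hI1 : IntegrableOn g (Set.Ico (-π) (-(π / 2))) volume :=
    (c1.integrableOn_Icc.mono_set Set.Ico_subset_Icc_self).congr_fun e1 measurableSet_Ico
  have hI2 : IntegrableOn g (Set.Ico (-(π / 2)) (π / 2)) volume :=
    (c2.integrableOn_Icc.mono_set Set.Ico_subset_Icc_self).congr_fun e2 measurableSet_Ico
  have hI3 : IntegrableOn g (Set.Ico (π / 2) π) volume :=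
    (c1.integrableOn_Icc.mono_set Set.Ico_subset_Icc_self).congr_fun e3 measurableSet_Ico
  have split : Set.Ico (-π) π
      = Set.Ico (-π) (-(π / 2)) ∪ (Set.Ico (-(π / 2)) (π / 2) ∪ Set.Ico (π / 2) π) := by
    rw [Set.Ico_union_Ico_eq_Ico (by linarith) (by linarith),
      Set.Ico_union_Ico_eq_Ico (by linarith) (by linarith)]
  have hd1 : Disjoint (Set.Ico (-π) (-(π / 2)))
      (Set.Ico (-(π / 2)) (π / 2) ∪ Set.Ico (π / 2) π) := by
    rw [Set.Ico_union_Ico_eq_Ico (by linarith) (by linarith)]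
    exact Set.Ico_disjoint_Ico_same
  have hd2 : Disjoint (Set.Ico (-(π / 2)) (π / 2)) (Set.Ico (π / 2) π) :=
    Set.Ico_disjoint_Ico_same
  rw [split, MeasureTheory.setIntegral_union hd1
      (measurableSet_Ico.union measurableSet_Ico) hI1 (hI2.union hI3),
    MeasureTheory.setIntegral_union hd2 measurableSet_Ico hI2 hI3,
    ← MeasureTheory.setIntegral_congr_fun measurableSet_Ico e1,
    ← MeasureTheory.setIntegral_congr_fun measurableSet_Ico e2,
    ← MeasureTheory.setIntegral_congr_fun measurableSet_Ico e3,
    piece _ _ _ (by linarith), piece _ _ _ (by linarith), piece _ _ _ (by linarith)]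
  rw [Real.sin_pi, Real.sin_pi_div_two, Real.sin_neg, Real.sin_neg, Real.sin_pi,
    Real.sin_pi_div_two]
  field_simp
  ring
end

section
/- Let y ∈ ℝ and U be uniformly distributed on an interval [a, a+1) of length 1. Define K = ⌊y + U⌉ (round to nearest integer) and Ŷ = K - U. Then Ŷ - y is uniformly distributed on [-1/2, 1/2). -/
/-!
Since `round x - x = 1/2 - fract (x + 1/2)`, the quantization error is `1/2 - fract (y + U + 1/2)`.
The translate `y + U + 1/2` is uniform on an interval of length one, and `fract` sends the uniform
law on any such interval to the uniform law on `[0, 1)`: the integer inside the interval cuts it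
into two pieces on which `fract` is a translation, and the two images tile `[0, 1)`. The
reflection `t ↦ 1/2 - t` then gives the uniform law on `(-1/2, 1/2]`, which is that on
`[-1/2, 1/2)` up to a null set.
-/

open MeasureTheory Set

theorem round_sub_self_eq_half_sub_fract {R : Type*} [Field R] [LinearOrder R]
    [IsStrictOrderedRing R] [FloorRing R] (x : R) :
    (round x : R) - x = 1 / 2 - Int.fract (x + 1 / 2) := by
  rw [round_eq, Int.fract]
  ring

theorem Int.fract_eqOn_Ico {R : Type*} [Ring R] [LinearOrder R] [FloorRing R] [IsOrderedRing R]
    (m : ℤ) : EqOn Int.fract (· + -(m : R)) (Ico (m : R) (m + 1)) := fun _ hx => by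
  rw [Int.fract, Int.floor_eq_iff.2 hx, sub_eq_add_neg]

section Invariant

variable {G : Type*} [AddGroup G] [MeasurableSpace G] [MeasurableAdd G] (μ : Measure G)

theorem Measure.map_add_const_restrict [μ.IsAddRightInvariant] (d : G) (s : Set G) :
    (μ.restrict s).map (· + d) = μ.restrict ((· + d) '' s) :=
  ((measurePreserving_add_right μ d).restrict_image_emb
    (MeasurableEquiv.addRight d).measurableEmbedding s).map_eq

theorem Measure.map_const_sub_restrict [MeasurableNeg G] [μ.IsNegInvariant] [μ.IsAddLeftInvariant]
    (d : G) (s : Set G) : (μ.restrict s).map (d - ·) = μ.restrict ((d - ·) '' s) :=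
  ((Measure.measurePreserving_sub_left μ d).restrict_image_emb
    (MeasurableEquiv.subLeft d).measurableEmbedding s).map_eq

end Invariant

theorem map_volume_restrict_Ico_of_eqOn_add_const {f : ℝ → ℝ} {d p q : ℝ}
    (h : EqOn f (· + d) (Ico p q)) :
    (volume.restrict (Ico p q)).map f = volume.restrict (Ico (p + d) (q + d)) := by
  rw [Measure.map_congr (ae_restrict_of_forall_mem measurableSet_Ico h),
    Measure.map_add_const_restrict, image_add_const_Ico]

theorem map_fract_volume_restrict_Ico (a : ℝ) :
    (volume.restrict (Ico a (a + 1))).map Int.fract = volume.restrict (Ico 0 1) := by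
  set n := ⌈a⌉
  have ha_le : a ≤ n := Int.le_ceil a
  have hlt_a : (n : ℝ) < a + 1 := by linarith [Int.ceil_lt_add_one a]
  have hlow : (volume.restrict (Ico a n)).map Int.fract
      = volume.restrict (Ico (a + 1 - n) 1) := by
    have h : EqOn Int.fract (· + -((n : ℝ) - 1)) (Ico a n) := by
      have := Int.fract_eqOn_Ico (R := ℝ) (n - 1)
      push_cast at this
      exact this.mono (Ico_subset_Ico (by linarith) (by simp))
    rw [map_volume_restrict_Ico_of_eqOn_add_const h]
    congr 2 <;> ring
  have hhigh : (volume.restrict (Ico (n : ℝ) (a + 1))).map Int.fract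
      = volume.restrict (Ico 0 (a + 1 - n)) := by
    rw [map_volume_restrict_Ico_of_eqOn_add_const
      ((Int.fract_eqOn_Ico n).mono (Ico_subset_Ico le_rfl (by linarith)))]
    congr 2
    ring
  rw [← Ico_union_Ico_eq_Ico ha_le hlt_a.le, Measure.restrict_union Ico_disjoint_Ico_same
    measurableSet_Ico, Measure.map_add _ _ measurable_fract, hlow, hhigh, add_comm,
    ← Measure.restrict_union Ico_disjoint_Ico_same measurableSet_Ico,
    Ico_union_Ico_eq_Ico (by linarith) (by linarith)]

/-- Universal quantization: if `U` is uniform on `[a, a+1)`, `K = ⌊y + U⌉` and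
`Ŷ = K - U`, then `Ŷ - y` is uniformly distributed on `[-1/2, 1/2)`. -/
theorem stmt_5 (y a : ℝ) :
    Measure.map (fun u : ℝ => ((round (y + u) : ℝ) - u) - y)
        (volume.restrict (Set.Ico a (a + 1)))
      = volume.restrict (Set.Ico (-(1 / 2) : ℝ) (1 / 2)) := by
  have hfactor : (fun u : ℝ => ((round (y + u) : ℝ) - u) - y)
      = (1 / 2 - ·) ∘ Int.fract ∘ (· + (y + 1 / 2)) := by
    funext u
    rw [Function.comp_apply, Function.comp_apply, show u + (y + 1 / 2) = y + u + 1 / 2 by ring,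
      ← round_sub_self_eq_half_sub_fract]
    ring
  have hshift : (· + (y + 1 / 2)) '' Ico a (a + 1)
      = Ico (a + (y + 1 / 2)) (a + (y + 1 / 2) + 1) := by
    rw [image_add_const_Ico, add_right_comm]
  rw [hfactor, ← Measure.map_map (by fun_prop) (measurable_fract.comp (by fun_prop)),
    ← Measure.map_map measurable_fract (by fun_prop), Measure.map_add_const_restrict, hshift,
    map_fract_volume_restrict_Ico, Measure.map_const_sub_restrict, image_const_sub_Ico,
    sub_zero, show (1 / 2 : ℝ) - 1 = -(1 / 2) by norm_num]
  exact Measure.restrict_congr_set Ico_ae_eq_Ioc.symm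
end

section
/- If X is uniform on an arc {(cos θ, sin θ) : θ ∈ [a, a+t)} of the unit circle with 0 < t ≤ 2π, and c* = E[X], then E[‖X - c*‖²] = (t² + 2cos(t) - 2)/t². -/
open Real MeasureTheory

/-- The point on the unit circle at angle `θ`, as an element of `ℝ²`. -/
noncomputable def circlePoint (θ : ℝ) : EuclideanSpace ℝ (Fin 2) :=
  (WithLp.equiv 2 (Fin 2 → ℝ)).symm ![Real.cos θ, Real.sin θ]

/-!
Expanding the square, the mean squared deviation of a square-integrable `f` from its average
`m` is the mean of `‖f‖²` minus `‖m‖²`. On the circle `‖f‖ = 1`, and since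
`θ ↦ circlePoint (θ - π/2)` is an antiderivative of `circlePoint`, the integral over an arc of
length `t` is a chord of the unit circle, of squared length `2 - 2 cos t`. Hence the answer is
`1 - (2 - 2 cos t) / t²`.
-/

open scoped InnerProductSpace

section Variance

variable {α E : Type*} [MeasurableSpace α] [NormedAddCommGroup E] [InnerProductSpace ℝ E]
  [CompleteSpace E] {μ : Measure α} [IsFiniteMeasure μ]

theorem integral_norm_sub_average_sq {f : α → E} (hf : MemLp f 2 μ) :
    ∫ x, ‖f x - ⨍ y, f y ∂μ‖ ^ 2 ∂μ = ∫ x, ‖f x‖ ^ 2 ∂μ - μ.real Set.univ * ‖⨍ y, f y ∂μ‖ ^ 2 := by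
  set m := ⨍ y, f y ∂μ
  have hf1 : Integrable f μ := hf.integrable one_le_two
  have hf2 : Integrable (fun x => ‖f x‖ ^ 2) μ := hf.integrable_norm_pow two_ne_zero
  have hinner : Integrable (fun x => 2 * ⟪m, f x⟫_ℝ) μ := (hf1.const_inner m).const_mul 2
  simp_rw [norm_sub_sq_real, real_inner_comm m]
  rw [integral_add (f := fun x => ‖f x‖ ^ 2 - 2 * ⟪m, f x⟫_ℝ) (hf2.sub hinner)
      (integrable_const _), integral_sub hf2 hinner, integral_const_mul, integral_inner hf1,
    ← measure_smul_average (μ := μ) f, integral_const, inner_smul_right,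
    real_inner_self_eq_norm_sq, smul_eq_mul]
  ring

end Variance

theorem circlePoint_eq (θ : ℝ) :
    circlePoint θ = cos θ • EuclideanSpace.single 0 1 + sin θ • EuclideanSpace.single 1 1 := by
  ext i; fin_cases i <;> simp [circlePoint]

theorem inner_circlePoint (u v : ℝ) : ⟪circlePoint u, circlePoint v⟫_ℝ = cos (u - v) := by
  simp only [circlePoint, WithLp.equiv_symm_apply, PiLp.inner_apply, RCLike.inner_apply,
    ringHom_apply, Fin.sum_univ_two, Matrix.cons_val_zero, Matrix.cons_val_one,
    Matrix.cons_val_fin_one, cos_sub]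
  ring

theorem norm_circlePoint (θ : ℝ) : ‖circlePoint θ‖ = 1 := by
  have h := inner_circlePoint θ θ
  rw [sub_self, cos_zero, real_inner_self_eq_norm_sq] at h
  exact (pow_eq_one_iff_of_nonneg (norm_nonneg _) two_ne_zero).1 h

theorem norm_circlePoint_sub_sq (u v : ℝ) :
    ‖circlePoint u - circlePoint v‖ ^ 2 = 2 - 2 * cos (u - v) := by
  rw [norm_sub_sq_real, inner_circlePoint, norm_circlePoint, norm_circlePoint]
  ring

theorem hasDerivAt_circlePoint (θ : ℝ) : HasDerivAt circlePoint (circlePoint (θ + π / 2)) θ := by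
  have h := ((hasDerivAt_cos θ).smul_const (EuclideanSpace.single (0 : Fin 2) (1 : ℝ))).add
    ((hasDerivAt_sin θ).smul_const (EuclideanSpace.single (1 : Fin 2) (1 : ℝ)))
  rw [circlePoint_eq, cos_add_pi_div_two, sin_add_pi_div_two]
  exact h.congr_of_eventuallyEq (.of_forall circlePoint_eq)

theorem continuous_circlePoint : Continuous circlePoint :=
  continuous_iff_continuousAt.2 fun θ => (hasDerivAt_circlePoint θ).continuousAt

theorem integral_circlePoint (a b : ℝ) :
    ∫ θ in a..b, circlePoint θ = circlePoint (b - π / 2) - circlePoint (a - π / 2) := by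
  refine intervalIntegral.integral_eq_sub_of_hasDerivAt (f := fun θ => circlePoint (θ - π / 2))
    (fun θ _ => ?_) (continuous_circlePoint.intervalIntegrable a b)
  simpa using (hasDerivAt_circlePoint (θ - π / 2)).comp_sub_const θ (π / 2)

theorem stmt_10_general (a t : ℝ) (ht : 0 < t)
    (c : EuclideanSpace ℝ (Fin 2))
    (hc : c = (t⁻¹ : ℝ) • ∫ θ in Set.Ico a (a + t), circlePoint θ) :
    (∫ θ in Set.Ico a (a + t), ‖circlePoint θ - c‖ ^ 2) / t
      = (t ^ 2 + 2 * Real.cos t - 2) / t ^ 2 := by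
  have hvol : (volume.restrict (Set.Ico a (a + t))).real Set.univ = t := by
    simp [ht.le]
  have hmean : c = ⨍ θ in Set.Ico a (a + t), circlePoint θ := by
    rw [hc, average_eq, hvol]
  have hL2 : MemLp circlePoint 2 (volume.restrict (Set.Ico a (a + t))) :=
    MemLp.of_bound continuous_circlePoint.aestronglyMeasurable 1
      (ae_of_all _ fun θ => (norm_circlePoint θ).le)
  have hchord : ∫ θ in Set.Ico a (a + t), circlePoint θ
      = circlePoint (a + t - π / 2) - circlePoint (a - π / 2) := by
    rw [integral_Ico_eq_integral_Ioo, ← integral_Ioc_eq_integral_Ioo,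
      ← intervalIntegral.integral_of_le (by linarith), integral_circlePoint]
  have hc_sq : ‖c‖ ^ 2 = (2 - 2 * cos t) / t ^ 2 := by
    rw [hc, norm_smul, mul_pow, hchord, norm_circlePoint_sub_sq]
    simp [div_eq_inv_mul]
  rw [hmean, integral_norm_sub_average_sq hL2, hvol, ← hmean, hc_sq]
  simp only [norm_circlePoint, one_pow, integral_const, hvol, smul_eq_mul, mul_one]
  field_simp
  ring

/-- If `X` is uniform on an arc `{(cos θ, sin θ) : θ ∈ [a, a+t)}` of the unit circle,
`0 < t ≤ 2π`, and `c* = E[X]` is its centroid, then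
`E[‖X - c*‖²] = (t² + 2 cos t - 2)/t²`. -/
theorem stmt_10 (a t : ℝ) (ht : 0 < t) (ht' : t ≤ 2 * π)
    (c : EuclideanSpace ℝ (Fin 2))
    (hc : c = (t⁻¹ : ℝ) • ∫ θ in Set.Ico a (a + t), circlePoint θ) :
    (∫ θ in Set.Ico a (a + t), ‖circlePoint θ - c‖ ^ 2) / t
      = (t ^ 2 + 2 * Real.cos t - 2) / t ^ 2 :=
  stmt_10_general a t ht c hc
end

section
/- For N ≥ 1, if Θ is uniform on the circle and Θ̂ is uniform on the arc of length 2π/N (Voronoi cell of an N-point vector quantizer) containing Θ, then E[1 - cos(Θ̂ - Θ)] = 1 - (N·sin(π/N)/π)². -/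
open Real MeasureTheory

/-! Over an arc of half-width `a` centred at `c`, the integral of `1 - cos (x - θ)` is
`2a - 2 sin a cos (c - θ)`, so everything reduces to averaging `cos (c(θ) - θ)`, where `c(θ)` is
the codebook angle nearest to `θ`. That function has period `w = 2π/N` and equals `cos θ` on the
cell `(-w/2, w/2)`, so over the `N` cells of the circle it integrates to `2N sin (π/N)`. -/

theorem integral_one_sub_cos_sub_Ico (c a θ : ℝ) (ha : 0 ≤ a) :
    ∫ x in Set.Ico (c - a) (c + a), (1 - cos (x - θ)) = 2 * a - 2 * sin a * cos (c - θ) := by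
  have hsin : sin (c + a - θ) - sin (c - a - θ) = 2 * sin a * cos (c - θ) := by
    rw [show c + a - θ = (c - θ) + a by ring, show c - a - θ = (c - θ) - a by ring]
    simp only [sin_add, sin_sub, cos_sub]
    ring
  rw [setIntegral_congr_set Ico_ae_eq_Ioc, ← intervalIntegral.integral_of_le (by linarith),
    intervalIntegral.integral_sub intervalIntegrable_const
      ((by fun_prop : Continuous fun x => cos (x - θ)).intervalIntegrable _ _),
    intervalIntegral.integral_comp_sub_right cos θ, integral_cos, hsin]
  simp only [intervalIntegral.integral_const, smul_eq_mul, mul_one]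
  ring

/-- The point of the codebook `wℤ` nearest to `θ`: the centre of the Voronoi cell of `θ`. -/
noncomputable def nearestCenter (w θ : ℝ) : ℝ := w * round (θ / w)

theorem nearestCenter_add_self {w : ℝ} (hw : w ≠ 0) (θ : ℝ) :
    nearestCenter w (θ + w) = nearestCenter w θ + w := by
  simp only [nearestCenter, add_div, div_self hw, round_add_one]
  push_cast
  ring

theorem nearestCenter_of_abs_lt {w θ : ℝ} (hw : 0 < w) (hθ : |θ| < w / 2) :
    nearestCenter w θ = 0 := by
  rw [abs_lt] at hθ
  have hround : round (θ / w) = 0 := by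
    rw [round_eq_zero_iff, Set.mem_Ico, le_div_iff₀ hw, div_lt_iff₀ hw]
    constructor <;> linarith
  simp [nearestCenter, hround]

theorem measurable_nearestCenter (w : ℝ) : Measurable (nearestCenter w) := by
  unfold nearestCenter
  simp only [round_eq]
  fun_prop

theorem periodic_comp_nearestCenter_sub (f : ℝ → ℝ) {w : ℝ} (hw : w ≠ 0) :
    Function.Periodic (fun θ => f (nearestCenter w θ - θ)) w := fun θ => by
  simp only [nearestCenter_add_self hw, add_sub_add_right_eq_sub]

theorem intervalIntegrable_cos_nearestCenter_sub (w a b : ℝ) :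
    IntervalIntegrable (fun θ => cos (nearestCenter w θ - θ)) volume a b :=
  intervalIntegrable_const.mono_fun'
    ((measurable_nearestCenter w).sub measurable_id).cos.aestronglyMeasurable
    (Filter.Eventually.of_forall fun _ => abs_cos_le_one _)

theorem integral_cos_nearestCenter_sub_period {w : ℝ} (hw : 0 < w) :
    ∫ θ in (-(w / 2))..(w / 2), cos (nearestCenter w θ - θ) = 2 * sin (w / 2) := by
  have hcell : ∀ θ ∈ Set.Ioo (-(w / 2)) (w / 2), cos (nearestCenter w θ - θ) = cos θ :=
    fun θ hθ => by rw [nearestCenter_of_abs_lt hw (abs_lt.mpr hθ), zero_sub, cos_neg]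
  rw [intervalIntegral.integral_of_le (by linarith), integral_Ioc_eq_integral_Ioo,
    setIntegral_congr_fun measurableSet_Ioo hcell, ← integral_Ioc_eq_integral_Ioo,
    ← intervalIntegral.integral_of_le (by linarith), integral_cos, sin_neg]
  ring

theorem integral_cos_nearestCenter_sub {w : ℝ} (hw : 0 < w) (n : ℕ) :
    ∫ θ in (0 : ℝ)..n * w, cos (nearestCenter w θ - θ) = n * (2 * sin (w / 2)) := by
  have hper := periodic_comp_nearestCenter_sub cos hw.ne'
  have := hper.intervalIntegral_add_zsmul_eq n 0 (intervalIntegrable_cos_nearestCenter_sub w)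
  rw [zero_add, hper.intervalIntegral_add_eq 0 (-(w / 2)), show -(w / 2) + w = w / 2 by ring,
    integral_cos_nearestCenter_sub_period hw] at this
  simpa using this

/-- For `N ≥ 1`: if `Θ` is uniform on the circle (`[0, 2π)`, density `1/(2π)`) and,
conditional on `Θ`, the reconstruction `Θ̂` is uniform (density `N/(2π)`) on the Voronoi
arc of length `2π/N` containing `Θ` (the arc centered at the nearest codebook angle
`(2π/N)⌊Θ N/(2π)⌉`), then `E[1 - cos (Θ̂ - Θ)] = 1 - (N sin(π/N)/π)²`. -/
theorem stmt_14 (N : ℕ) (hN : 1 ≤ N) :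
    (∫ θ in Set.Ico (0 : ℝ) (2 * π),
        (∫ θhat in Set.Ico
              ((2 * π / N) * (round (θ * N / (2 * π)) : ℝ) - π / N)
              ((2 * π / N) * (round (θ * N / (2 * π)) : ℝ) + π / N),
            (1 - Real.cos (θhat - θ)) * (N / (2 * π))) / (2 * π))
      = 1 - (N * Real.sin (π / N) / π) ^ 2 := by
  have hN0 : (0 : ℝ) < N := by exact_mod_cast hN
  set w : ℝ := 2 * π / N
  have hw : 0 < w := by positivity
  have hhalf : π / N = w / 2 := by ring
  have hperiods : 2 * π = N * w := by rw [mul_div_cancel₀ _ hN0.ne']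
  have hinner : ∀ θ, (∫ θhat in Set.Ico (w * (round (θ * N / (2 * π)) : ℝ) - π / N)
        (w * (round (θ * N / (2 * π)) : ℝ) + π / N), (1 - cos (θhat - θ)) * (N / (2 * π)))
      = 1 - N / π * sin (π / N) * cos (nearestCenter w θ - θ) := fun θ => by
    rw [integral_mul_const, integral_one_sub_cos_sub_Ico _ _ _ (by positivity), nearestCenter,
      div_div_eq_mul_div]
    field_simp
  simp only [hinner]
  rw [integral_div, setIntegral_congr_set Ico_ae_eq_Ioc,
    ← intervalIntegral.integral_of_le (by positivity),
    intervalIntegral.integral_sub intervalIntegrable_const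
      ((intervalIntegrable_cos_nearestCenter_sub w _ _).const_mul _),
    intervalIntegral.integral_const_mul, hperiods, integral_cos_nearestCenter_sub hw,
    ← hperiods, ← hhalf]
  simp only [intervalIntegral.integral_const, smul_eq_mul, mul_one, sub_zero]
  field_simp
end

section
/- Let θ ∈ ℝ, U uniform on [0,1), K = ⌊θ/π + U⌉ mod 2, and Θ̂ = π(K - U). Then there exists an integer-valued random variable J such that Θ̂ = θ + π·U' - 2πJ where U' is uniform on [-1/2, 1/2); in particular, Θ̂ mod 2π has the same distribution as (θ + π U') mod 2π. -/
open Real MeasureTheory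

/-!
Write `a = θ/π`, `n = ⌊a + U⌉` and `U' = n - a - U`. Since `n % 2 = n - 2 (n / 2)`, the estimate
`π (n % 2 - U)` equals `θ + π U' - 2π (n / 2)`, which is `θ + π U'` on the circle `ℝ/2πℤ`.
As `U` is uniform on `[0,1)`, `a + U` is uniform on `[a, a+1)`; the fractional part maps any
unit interval onto `[0,1)` by two translations, and `⌊x⌉ - x = 1/2 - fract (x + 1/2)`, so `U'` is
uniform on `(-1/2, 1/2]`, which agrees a.e. with `[-1/2, 1/2)`.
-/

lemma map_restrict_eq_of_eqOn_add_const {f : ℝ → ℝ} {s : Set ℝ} (hs : MeasurableSet s) {d : ℝ}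
    (hf : Set.EqOn f (· + d) s) :
    Measure.map f (volume.restrict s) = volume.restrict ((· + d) '' s) := by
  rw [Measure.map_congr ((ae_restrict_iff' hs).2 (Filter.Eventually.of_forall hf))]
  exact ((measurePreserving_add_right volume d).restrict_image_emb
    (MeasurableEquiv.addRight d).measurableEmbedding s).map_eq

lemma map_fract_restrict_Ico (c : ℝ) :
    Measure.map Int.fract (volume.restrict (Set.Ico c (c + 1)))
      = volume.restrict (Set.Ico (0 : ℝ) 1) := by
  set m : ℝ := ⌊c⌋ + 1 with hm
  have hcm : c < m := Int.lt_floor_add_one c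
  have hmc : m ≤ c + 1 := by linarith [Int.floor_le c]
  have fract_eq {k : ℤ} {x : ℝ} (hx : x ∈ Set.Ico (k : ℝ) (k + 1)) : Int.fract x = x + -k := by
    rw [Int.fract, Int.floor_eq_iff.2 hx, sub_eq_add_neg]
  have below : Set.EqOn Int.fract (· + -(m - 1)) (Set.Ico c m) := fun x hx => by
    simpa [hm] using fract_eq (k := ⌊c⌋) ⟨(Int.floor_le c).trans hx.1, by simpa [hm] using hx.2⟩
  have above : Set.EqOn Int.fract (· + -m) (Set.Ico m (c + 1)) := fun x hx => by
    simpa [hm] using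
      fract_eq (k := ⌊c⌋ + 1) ⟨by simpa [hm] using hx.1, by push_cast; linarith [hx.2]⟩
  rw [← Set.Ico_union_Ico_eq_Ico hcm.le hmc,
    Measure.restrict_union Set.Ico_disjoint_Ico_same measurableSet_Ico,
    Measure.map_add _ _ measurable_fract,
    map_restrict_eq_of_eqOn_add_const measurableSet_Ico below,
    map_restrict_eq_of_eqOn_add_const measurableSet_Ico above,
    Set.image_add_const_Ico, Set.image_add_const_Ico, add_neg_cancel,
    show c + 1 + -m = c + -(m - 1) by ring, show m + -(m - 1) = 1 by ring, add_comm,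
    ← Measure.restrict_union Set.Ico_disjoint_Ico_same measurableSet_Ico,
    Set.Ico_union_Ico_eq_Ico (by linarith) (by linarith)]

@[fun_prop]
lemma Measurable.round {α : Type*} [MeasurableSpace α] {f : α → ℝ} (hf : Measurable f) :
    Measurable fun x => round (f x) := by
  simp only [round_eq]
  fun_prop

lemma map_round_sub_self_restrict_Ico (c : ℝ) :
    Measure.map (fun x : ℝ => (round x : ℝ) - x) (volume.restrict (Set.Ico c (c + 1)))
      = volume.restrict (Set.Ico (-(1 / 2)) (1 / 2)) := by
  have hdecomp : (fun x : ℝ => (round x : ℝ) - x)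
      = (fun y => 1 / 2 - y) ∘ Int.fract ∘ (· + 1 / 2) := by
    funext x
    simp only [Function.comp_apply, round_eq, Int.fract]
    ring
  have shift := map_restrict_eq_of_eqOn_add_const measurableSet_Ico
    (Set.eqOn_refl (· + 1 / 2 : ℝ → ℝ) (Set.Ico c (c + 1)))
  have reflect := ((Measure.measurePreserving_sub_left volume (1 / 2 : ℝ)).restrict_image_emb
    (MeasurableEquiv.subLeft (1 / 2 : ℝ)).measurableEmbedding (Set.Ico 0 1)).map_eq
  rw [hdecomp, ← Measure.map_map (by fun_prop) (measurable_fract.comp (by fun_prop)),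
    ← Measure.map_map measurable_fract (by fun_prop), shift, Set.image_add_const_Ico,
    add_right_comm, map_fract_restrict_Ico, reflect, Set.image_const_sub_Ico]
  norm_num
  exact Measure.restrict_congr_set Ico_ae_eq_Ioc.symm

/-- Universal quantization adapted to the circle at 1 bit: with `U` uniform on `[0,1)`,
`K = ⌊θ/π + U⌉ mod 2` and `Θ̂ = π(K - U)`, there is an integer-valued `J` with
`Θ̂ = θ + π U' - 2π J` where `U' = ⌊θ/π + U⌉ - θ/π - U` is uniform on `[-1/2, 1/2)`;
in particular `Θ̂ mod 2π` has the same distribution as `(θ + π U') mod 2π`. -/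
theorem stmt_18 (θ : ℝ) :
    ∃ (J : ℝ → ℤ) (U' : ℝ → ℝ),
      (∀ u ∈ Set.Ico (0 : ℝ) 1,
        π * (((round (θ / π + u) % 2 : ℤ) : ℝ) - u)
          = θ + π * U' u - 2 * π * (J u : ℝ)) ∧
      Measure.map U' (volume.restrict (Set.Ico (0 : ℝ) 1))
        = volume.restrict (Set.Ico (-(1 / 2) : ℝ) (1 / 2)) ∧
      Measure.map
          (fun u : ℝ => ((π * (((round (θ / π + u) % 2 : ℤ) : ℝ) - u) : ℝ) :
              AddCircle (2 * π)))
          (volume.restrict (Set.Ico (0 : ℝ) 1))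
        = Measure.map (fun u' : ℝ => ((θ + π * u' : ℝ) : AddCircle (2 * π)))
            (volume.restrict (Set.Ico (-(1 / 2) : ℝ) (1 / 2))) := by
  set U' : ℝ → ℝ := fun u => (round (θ / π + u) : ℝ) - (θ / π + u)
  set J : ℝ → ℤ := fun u => round (θ / π + u) / 2
  have decomp (u : ℝ) :
      π * (((round (θ / π + u) % 2 : ℤ) : ℝ) - u) = θ + π * U' u - 2 * π * (J u : ℝ) := by
    have hθ : π * (θ / π) = θ := mul_div_cancel₀ θ pi_ne_zero
    simp only [U', J, Int.emod_def, Int.cast_sub, Int.cast_mul, Int.cast_ofNat]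
    linear_combination hθ
  have uniform : Measure.map U' (volume.restrict (Set.Ico (0 : ℝ) 1))
      = volume.restrict (Set.Ico (-(1 / 2) : ℝ) (1 / 2)) := by
    have shift := map_restrict_eq_of_eqOn_add_const measurableSet_Ico
      (Set.eqOn_refl (· + θ / π : ℝ → ℝ) (Set.Ico 0 1))
    rw [Set.image_add_const_Ico, zero_add, add_comm 1] at shift
    rw [← map_round_sub_self_restrict_Ico, ← shift, Measure.map_map (by fun_prop) (by fun_prop)]
    congr 1
    funext u
    simp only [U', Function.comp_apply, add_comm u]
  have on_circle (u : ℝ) :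
      ((π * (((round (θ / π + u) % 2 : ℤ) : ℝ) - u) : ℝ) : AddCircle (2 * π))
        = ((θ + π * U' u : ℝ) : AddCircle (2 * π)) := by
    rw [decomp, AddCircle.coe_sub, sub_eq_self, AddCircle.coe_eq_zero_iff]
    exact ⟨J u, by rw [zsmul_eq_mul]; ring⟩
  refine ⟨J, U', fun u _ => decomp u, uniform, ?_⟩
  rw [funext on_circle, ← uniform, Measure.map_map (by fun_prop) (by fun_prop)]
  rfl
end
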